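/- arXiv:2604.24445 — 2 statements merged into one kernel-verified Lean document; each statement's English description precedes it below -/
import Mathlib

section
/- Let X be a smooth quartic surface in P^3, C ~ sH + D a smooth aCM curve with s = 1 and D satisfying the aCM conditions H·D ≤ 6, D^2 ≤ 4. If N is a divisor with N ⊂ M (i.e., h^0(M-N) ≥ 0 with M = C - N effective and H·(M - N) ≥ 0) and N·H ≥ 5, then one is forced to H·D = 6, D^2 = 4, N·H = 5, H + D ~ 2N, and N^2 = 5; since N^2 = 2P_a(N) - 2 must be even, this is a contradiction. Hence N·H ≥ 5 implies s ≥ 2. -/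
/-!
Since `H·D ≤ 6` and `N·H ≥ 5`, the class `M - N = H + D - 2N` has `H`-degree
`4 + H·D - 2 N·H ≤ 0`; being zero or effective and `H` being ample, it is zero, so `H + D = 2N`.
Intersecting with `H` gives `H·D = 2 N·H - 4 ≥ 6`, hence `H·D = 6` and `D² = 4`, and squaring gives
`4 N² = (H + D)² = 20`. So `N² = 5` is odd, which adjunction on a K3 surface forbids.
-/

section IntersectionForm

variable {G : Type*} [AddCommGroup G] {inter : G → G → ℤ}

theorem inter_sub_left (haddl : ∀ a b c, inter (a + b) c = inter a c + inter b c) (a b c : G) :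
    inter (a - b) c = inter a c - inter b c :=
  (AddMonoidHom.mk' (inter · c) (haddl · · c)).map_sub a b

theorem inter_add_add_self (hsymm : ∀ a b, inter a b = inter b a)
    (haddl : ∀ a b c, inter (a + b) c = inter a c + inter b c) (a b : G) :
    inter (a + b) (a + b) = inter a a + 2 * inter a b + inter b b := by
  rw [haddl, hsymm a, hsymm b, haddl, haddl, hsymm b a]
  ring

theorem eq_zero_of_inter_ample_nonpos {h0 : G → ℕ} {H E : G}
    (hample : ∀ F, 0 < h0 F → F ≠ 0 → 0 < inter F H) (hE : E = 0 ∨ 0 < h0 E)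
    (hEH : inter E H ≤ 0) : E = 0 := by
  by_contra hne
  exact (hample E (hE.resolve_left hne) hne).not_ge hEH

end IntersectionForm

theorem quartic_s_eq_one_contradiction_general
    (Pic : Type*) [AddCommGroup Pic]
    (inter : Pic → Pic → ℤ)
    (hsymm : ∀ a b, inter a b = inter b a)
    (haddl : ∀ a b c, inter (a + b) c = inter a c + inter b c)
    (h0 : Pic → ℕ)
    (H D C M N : Pic)
    (hH2 : inter H H = 4)
    (hHD : inter H D ≤ 6)
    (hHD6 : inter H D = 6 → inter D D = 4)
    (hC : C = H + D)
    (hM : M = C - N)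
    -- `N ⊂ M`: `M - N` is zero or effective
    (hsub : M - N = 0 ∨ 0 < h0 (M - N))
    (hample : ∀ G, 0 < h0 G → G ≠ 0 → 0 < inter G H)
    -- adjunction on a K3: self-intersections are even
    (heven : ∀ G, Even (inter G G))
    (hNH : 5 ≤ inter N H) :
    False := by
  have hMNH : inter (M - N) H = inter H H + inter H D - 2 * inter N H := by
    rw [hM, hC, inter_sub_left haddl, inter_sub_left haddl, haddl, hsymm D H]
    ring
  have h2N : H + D = N + N := by
    have hMN := eq_zero_of_inter_ample_nonpos hample hsub (by omega)
    rwa [hM, hC, sub_sub, sub_eq_zero] at hMN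
  have hHD6' : inter H D = 6 := by
    have hdeg := congrArg (inter · H) h2N
    simp only [haddl, hsymm D H] at hdeg
    omega
  have hN2 : 4 * inter N N = 20 := by
    have hsq := inter_add_add_self hsymm haddl H D
    rw [h2N, inter_add_add_self hsymm haddl N N, hH2, hHD6', hHD6 hHD6'] at hsq
    linarith
  obtain ⟨k, hk⟩ := heven N
  omega

/-- (Lemma 5.1(iv)) On a smooth quartic surface `X ⊂ ℙ³` (`H² = 4`, `H`
ample), let `C ~ sH + D` with `s = 1` and `D` satisfying the aCM constraints `H·D ≤ 6`,
`D² ≤ 4` (with `D² = 4` when `H·D = 6`). If `N ⊂ M` for `M = C - N` (i.e. `M - N` is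
zero or effective, so `H·(M - N) ≥ 0`) and `N·H ≥ 5`, then one is forced to `H·D = 6`,
`D² = 4`, `N·H = 5`, `H + D ~ 2N` and `N² = 5`; since self-intersections on a K3 are
even (adjunction), this is a contradiction. Hence `N·H ≥ 5` forces `s ≥ 2`. -/
theorem quartic_s_eq_one_contradiction
    (Pic : Type*) [AddCommGroup Pic]
    (inter : Pic → Pic → ℤ)
    (hsymm : ∀ a b, inter a b = inter b a)
    (haddl : ∀ a b c, inter (a + b) c = inter a c + inter b c)
    (h0 : Pic → ℕ)
    (H D C M N : Pic)
    (hH2 : inter H H = 4)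
    (hHD : inter H D ≤ 6)
    (hD2 : inter D D ≤ 4)
    (hHD6 : inter H D = 6 → inter D D = 4)
    (hC : C = H + D)
    (hM : M = C - N)
    -- `N ⊂ M`: `M - N` is zero or effective
    (hsub : M - N = 0 ∨ 0 < h0 (M - N))
    (hMNH : 0 ≤ inter (M - N) H)
    (hample : ∀ G, 0 < h0 G → G ≠ 0 → 0 < inter G H)
    -- adjunction on a K3: self-intersections are even
    (heven : ∀ G, Even (inter G G))
    (hNH : 5 ≤ inter N H) :
    False :=
  quartic_s_eq_one_contradiction_general Pic inter hsymm haddl h0 H D C M N hH2 hHD hHD6 hC hM hsub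
    hample heven hNH
end

section
/- Let C be a smooth curve of genus g with Clifford index γ_C, and suppose F is a divisor with h^0(O_C(F)) ≥ 2 and deg O_C(F) ≤ g - 1. If O_C(2F') with F' = O_C(F) computes γ_C via a class N = 2F (i.e., γ_C = 2(F·C) - 4 and F·C ≥ 3), then the pencil |O_C(F)| has Clifford index at most F·C - 2 = γ_C/2 < γ_C, a contradiction; hence in the decomposition N ~ tF one must have t = 1. -/
/-!
A pencil `|O_C(F)|` contributes at most `F·C - 2` to the Clifford index, while `t = 2` would
force `γ_C = 2 F·C - 4`; since `F·C ≥ 3`, the latter exceeds `F·C - 2`, so the minimality of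
`γ_C` rules out `t = 2`.
-/

theorem clifford_index_le_degree_sub_two_of_pencil {γC FC : ℤ} {h0F : ℕ} (hh0 : 2 ≤ h0F)
    (hmin : γC ≤ FC - 2 * ((h0F : ℤ) - 1)) : γC ≤ FC - 2 := by
  omega

theorem clifford_pencil_forces_t_eq_one_general
    (γC FC : ℤ) (t h0F : ℕ)
    (ht : t = 1 ∨ t = 2)
    (hFC : 3 ≤ FC)
    (hh0 : 2 ≤ h0F)  -- h⁰(O_C(F)) ≥ 2
    (hmin : γC ≤ FC - 2 * ((h0F : ℤ) - 1))  -- |O_C(F)| contributes to γ_C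
    (ht2 : t = 2 → γC = 2 * FC - 4) :
    t = 1 := by
  rcases ht with rfl | rfl
  · rfl
  · have hpencil := clifford_index_le_degree_sub_two_of_pencil hh0 hmin
    have hdoubled : γC = 2 * FC - 4 := ht2 rfl
    omega

/-- Let `C` be a smooth curve of genus `g` with Clifford index `γ_C`, and
`F` a divisor with `h⁰(O_C(F)) ≥ 2` and `deg O_C(F) = F·C ≤ g - 1`, `F·C ≥ 3`, so the
pencil `|O_C(F)|` contributes to `γ_C`: `γ_C ≤ γ(O_C(F)) = F·C - 2(h⁰(O_C(F)) - 1)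
≤ F·C - 2`. If `N ~ tF` (with `t = 1` or `t = 2`) computed `γ_C` with `t = 2`, i.e.
`γ_C = 2(F·C) - 4`, then `F·C - 2 = γ_C/2 < γ_C`, contradicting the minimality of
`γ_C`; hence `t = 1`. -/
theorem clifford_pencil_forces_t_eq_one
    (g γC FC : ℤ) (t h0F : ℕ)
    (ht : t = 1 ∨ t = 2)
    (hFC : 3 ≤ FC)
    (hdeg : FC ≤ g - 1)
    (hh0 : 2 ≤ h0F)  -- h⁰(O_C(F)) ≥ 2
    (hmin : γC ≤ FC - 2 * ((h0F : ℤ) - 1))  -- |O_C(F)| contributes to γ_C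
    (ht2 : t = 2 → γC = 2 * FC - 4) :
    t = 1 :=
  clifford_pencil_forces_t_eq_one_general γC FC t h0F ht hFC hh0 hmin ht2
end
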